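/- Let S be a real symmetric positive definite 2N×2N matrix, and let C be any real symmetric positive definite 2N×2N matrix lying in 𝒢 (equivalently, commuting with J). Then log det C + trace(C⁻¹ S) ≥ log det Ṡ + 2N, with equality if and only if C = Ṡ. (This expresses that under the properness hypothesis the Gaussian maximum-likelihood estimate of the covariance matrix is Ṡ.) -/

import Mathlib

open Matrix Polynomial

/-- The block matrix `J = [[0, -I],[I, 0]]`. -/
def J (N : ℕ) : Matrix (Fin N ⊕ Fin N) (Fin N ⊕ Fin N) ℝ :=
  Matrix.fromBlocks 0 (-1) 1 0

/-- A real `2N × 2N` matrix has the block form `[[G₁, -G₂],[G₂, G₁]]`. -/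
def blockForm {N : ℕ} (G : Matrix (Fin N ⊕ Fin N) (Fin N ⊕ Fin N) ℝ) : Prop :=
  ∃ G₁ G₂ : Matrix (Fin N) (Fin N) ℝ, G = Matrix.fromBlocks G₁ (-G₂) G₂ G₁

/-- The proper part `Ċ` of a real `2N × 2N` matrix `C` with blocks `[[A, B],[B′, D]]`:
`Ċ = (1/2)·[[A+D, B−B′],[B′−B, A+D]]`. -/
noncomputable def dotPart {N : ℕ} (C : Matrix (Fin N ⊕ Fin N) (Fin N ⊕ Fin N) ℝ) :
    Matrix (Fin N ⊕ Fin N) (Fin N ⊕ Fin N) ℝ :=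
  (1/2 : ℝ) • Matrix.fromBlocks (C.toBlocks₁₁ + C.toBlocks₂₂) (C.toBlocks₁₂ - C.toBlocks₂₁)
    (C.toBlocks₂₁ - C.toBlocks₁₂) (C.toBlocks₁₁ + C.toBlocks₂₂)

/-- The improper part `C̈ = C − Ċ`. -/
noncomputable def ddotPart {N : ℕ} (C : Matrix (Fin N ⊕ Fin N) (Fin N ⊕ Fin N) ℝ) :
    Matrix (Fin N ⊕ Fin N) (Fin N ⊕ Fin N) ℝ :=
  C - dotPart C

/-!
For positive definite `A`, `B` write `A = Yᴴ Y` with `Y` invertible and put `P = Y⁻ᴴ B Y⁻¹`.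
Then `log det A + tr (A⁻¹ B) - log det B = tr P - log det P = ∑ (μᵢ - log μᵢ)` over the
eigenvalues `μᵢ > 0` of `P`, and `x - log x ≥ 1` with equality only at `x = 1`. Hence
`log det A + tr (A⁻¹ B) ≥ log det B + n`, with equality iff `P = 1`, i.e. `A = B`.
Moreover `Ṡ = (S + J S Jᵀ) / 2` is positive definite, and when `C` commutes with `J`,
`tr (C⁻¹ J S Jᵀ) = tr (Jᵀ C⁻¹ J S) = tr (C⁻¹ S)`; so `tr (C⁻¹ S) = tr (C⁻¹ Ṡ)` and the theorem
is the inequality above for `A = C`, `B = Ṡ`.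
-/

lemma Real.one_le_sub_log {x : ℝ} (hx : 0 < x) : 1 ≤ x - Real.log x := by
  linarith [Real.log_le_sub_one_of_pos hx]

lemma Real.sub_log_eq_one_iff {x : ℝ} (hx : 0 < x) : x - Real.log x = 1 ↔ x = 1 := by
  refine ⟨fun h => by_contra fun hx1 => ?_, fun h => by simp [h]⟩
  linarith [Real.log_lt_sub_one_of_pos hx hx1]

namespace Matrix

variable {n : Type*} [Fintype n] [DecidableEq n]

lemma IsHermitian.eq_one_of_eigenvalues_eq_one {P : Matrix n n ℝ} (hP : P.IsHermitian)
    (h : ∀ i, hP.eigenvalues i = 1) : P = 1 := by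
  have hdiag : (RCLike.ofReal ∘ hP.eigenvalues : n → ℝ) = fun _ => 1 :=
    funext fun i => by simp [h i]
  rw [hP.spectral_theorem, hdiag, diagonal_one, map_one]

lemma PosDef.trace_sub_log_det {P : Matrix n n ℝ} (hP : P.PosDef) :
    P.trace - Real.log P.det = ∑ i, (hP.1.eigenvalues i - Real.log (hP.1.eigenvalues i)) := by
  rw [hP.1.trace_eq_sum_eigenvalues, hP.1.det_eq_prod_eigenvalues, Finset.sum_sub_distrib]
  simp only [RCLike.ofReal_real_eq_id, id]
  rw [Real.log_prod fun i _ => (hP.eigenvalues_pos i).ne']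

lemma PosDef.card_le_trace_sub_log_det {P : Matrix n n ℝ} (hP : P.PosDef) :
    (Fintype.card n : ℝ) ≤ P.trace - Real.log P.det := by
  rw [hP.trace_sub_log_det, Fintype.card_eq_sum_ones, Nat.cast_sum, Nat.cast_one]
  exact Finset.sum_le_sum fun i _ => Real.one_le_sub_log (hP.eigenvalues_pos i)

lemma PosDef.trace_sub_log_det_eq_card_iff {P : Matrix n n ℝ} (hP : P.PosDef) :
    P.trace - Real.log P.det = Fintype.card n ↔ P = 1 := by
  refine ⟨fun h => hP.1.eq_one_of_eigenvalues_eq_one fun i => ?_, by rintro rfl; simp⟩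
  rw [eq_comm, hP.trace_sub_log_det, Fintype.card_eq_sum_ones, Nat.cast_sum, Nat.cast_one,
    Finset.sum_eq_sum_iff_of_le fun i _ => (Real.one_le_sub_log (hP.eigenvalues_pos i)).ge] at h
  exact (Real.sub_log_eq_one_iff (hP.eigenvalues_pos i)).mp (h i (Finset.mem_univ i)).symm

lemma PosDef.exists_trace_sub_log_det_eq {A B : Matrix n n ℝ} (hA : A.PosDef) (hB : B.PosDef) :
    ∃ P : Matrix n n ℝ, P.PosDef ∧
      P.trace - Real.log P.det = Real.log A.det + (A⁻¹ * B).trace - Real.log B.det ∧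
      (P = 1 ↔ A = B) := by
  obtain ⟨Y, hY, rfl⟩ : ∃ Y : Matrix n n ℝ, IsUnit Y ∧ A = Yᴴ * Y := by
    open scoped MatrixOrder in
    exact CStarAlgebra.isStrictlyPositive_iff_eq_star_mul_self.mp hA.isStrictlyPositive
  have hYdet : IsUnit Y.det := (isUnit_iff_isUnit_det Y).mp hY
  have hmul_inv : Y * Y⁻¹ = 1 := mul_nonsing_inv Y hYdet
  have hinv_mul : Y⁻¹ * Y = 1 := nonsing_inv_mul Y hYdet
  have hinv_star_mul : Y⁻¹ᴴ * Yᴴ = 1 := by rw [← conjTranspose_mul, hmul_inv, conjTranspose_one]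
  have hstar_mul_inv_star : Yᴴ * Y⁻¹ᴴ = 1 := by
    rw [← conjTranspose_mul, hinv_mul, conjTranspose_one]
  have hP : (Y⁻¹ᴴ * B * Y⁻¹).PosDef :=
    hB.conjTranspose_mul_mul_same <|
      mulVec_injective_iff_isUnit.mpr (isUnit_nonsing_inv_iff.mpr hY)
  have hdet : (Y⁻¹ᴴ * B * Y⁻¹).det * (Yᴴ * Y).det = B.det := by
    have h₁ := congrArg det hinv_star_mul
    have h₂ := congrArg det hinv_mul
    simp only [det_mul, det_one] at h₁ h₂ ⊢
    linear_combination (B.det * Y⁻¹.det * Y.det) * h₁ + B.det * h₂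
  have hinv : (Yᴴ * Y)⁻¹ = Y⁻¹ * Y⁻¹ᴴ :=
    inv_eq_left_inv <| by
      rw [Matrix.mul_assoc, ← Matrix.mul_assoc Y⁻¹ᴴ, hinv_star_mul, Matrix.one_mul, hinv_mul]
  refine ⟨Y⁻¹ᴴ * B * Y⁻¹, hP, ?_, ⟨fun h => ?_, ?_⟩⟩
  · rw [← hdet, Real.log_mul hP.det_pos.ne' hA.det_pos.ne', hinv, Matrix.mul_assoc Y⁻¹,
      trace_mul_comm Y⁻¹, Matrix.mul_assoc]
    ring
  · calc Yᴴ * Y = Yᴴ * (Y⁻¹ᴴ * B * Y⁻¹) * Y := by rw [h, Matrix.mul_one]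
      _ = (Yᴴ * Y⁻¹ᴴ) * B * (Y⁻¹ * Y) := by simp only [Matrix.mul_assoc]
      _ = B := by rw [hstar_mul_inv_star, hinv_mul, Matrix.one_mul, Matrix.mul_one]
  · rintro rfl
    rw [← Matrix.mul_assoc, hinv_star_mul, Matrix.one_mul, hmul_inv]

theorem PosDef.log_det_add_card_le {A B : Matrix n n ℝ} (hA : A.PosDef) (hB : B.PosDef) :
    Real.log B.det + Fintype.card n ≤ Real.log A.det + (A⁻¹ * B).trace := by
  obtain ⟨P, hP, hPAB, -⟩ := hA.exists_trace_sub_log_det_eq hB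
  linarith [hP.card_le_trace_sub_log_det]

theorem PosDef.log_det_add_trace_inv_mul_eq_iff {A B : Matrix n n ℝ} (hA : A.PosDef)
    (hB : B.PosDef) :
    Real.log A.det + (A⁻¹ * B).trace = Real.log B.det + Fintype.card n ↔ A = B := by
  obtain ⟨P, hP, hPAB, hP1⟩ := hA.exists_trace_sub_log_det_eq hB
  rw [← hP1, ← hP.trace_sub_log_det_eq_card_iff, hPAB]
  constructor <;> intro h <;> linarith

end Matrix

section

variable {N : ℕ}

lemma J_mul_transpose_J : J N * (J N)ᵀ = 1 := by
  simp [_root_.J, fromBlocks_transpose, fromBlocks_multiply, ← fromBlocks_one]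

lemma transpose_J_mul_J : (J N)ᵀ * J N = 1 := by
  simp [_root_.J, fromBlocks_transpose, fromBlocks_multiply, ← fromBlocks_one]

lemma blockForm.commute_J {C : Matrix (Fin N ⊕ Fin N) (Fin N ⊕ Fin N) ℝ} (h : blockForm C) :
    Commute C (J N) := by
  obtain ⟨G₁, G₂, rfl⟩ := h
  simp [Commute, SemiconjBy, _root_.J, fromBlocks_multiply]

lemma dotPart_eq_half_smul (S : Matrix (Fin N ⊕ Fin N) (Fin N ⊕ Fin N) ℝ) :
    dotPart S = (1 / 2 : ℝ) • (S + J N * S * (J N)ᵀ) := by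
  conv_rhs => rw [← fromBlocks_toBlocks S]
  rw [dotPart]
  congr 1
  simp only [_root_.J, fromBlocks_transpose, fromBlocks_multiply, fromBlocks_add]
  congr 1 <;> simp <;> abel

lemma posDef_dotPart {S : Matrix (Fin N ⊕ Fin N) (Fin N ⊕ Fin N) ℝ} (hS : S.PosDef) :
    (dotPart S).PosDef := by
  have hJ : Function.Injective (J N).vecMul :=
    vecMul_injective_iff_isUnit.mpr ⟨⟨J N, (J N)ᵀ, J_mul_transpose_J, transpose_J_mul_J⟩, rfl⟩
  have hJSJ := hS.mul_mul_conjTranspose_same hJ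
  rw [conjTranspose_eq_transpose_of_trivial] at hJSJ
  rw [dotPart_eq_half_smul]
  exact (hS.add hJSJ).smul (by norm_num)

lemma trace_inv_mul_dotPart {C : Matrix (Fin N ⊕ Fin N) (Fin N ⊕ Fin N) ℝ} (hC : IsUnit C)
    (hCJ : Commute C (J N)) (S : Matrix (Fin N ⊕ Fin N) (Fin N ⊕ Fin N) ℝ) :
    (C⁻¹ * dotPart S).trace = (C⁻¹ * S).trace := by
  have hCJ' : Commute C⁻¹ (J N) := by
    simpa [coe_units_inv] using Commute.units_inv_left (u := hC.unit) hCJ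
  have hconj : (C⁻¹ * (J N * S * (J N)ᵀ)).trace = (C⁻¹ * S).trace := by
    rw [← Matrix.mul_assoc, ← Matrix.mul_assoc, hCJ'.eq, trace_mul_comm, ← Matrix.mul_assoc,
      ← Matrix.mul_assoc, transpose_J_mul_J, Matrix.one_mul]
  rw [dotPart_eq_half_smul, Matrix.mul_smul, trace_smul, Matrix.mul_add, trace_add, hconj,
    smul_eq_mul]
  ring

end

theorem statement10_general (N : ℕ) (S C : Matrix (Fin N ⊕ Fin N) (Fin N ⊕ Fin N) ℝ)
    (hS : S.PosDef) (hC : C.PosDef) (hCb : blockForm C) :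
    Real.log (dotPart S).det + 2 * N ≤ Real.log C.det + (C⁻¹ * S).trace ∧
    (Real.log C.det + (C⁻¹ * S).trace = Real.log (dotPart S).det + 2 * N ↔ C = dotPart S) := by
  have hcard : (Fintype.card (Fin N ⊕ Fin N) : ℝ) = 2 * N := by
    rw [Fintype.card_sum, Fintype.card_fin, Nat.cast_add, two_mul]
  rw [← hcard, ← trace_inv_mul_dotPart hC.isUnit hCb.commute_J S]
  exact ⟨hC.log_det_add_card_le (posDef_dotPart hS),
    hC.log_det_add_trace_inv_mul_eq_iff (posDef_dotPart hS)⟩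

theorem statement10 (N : ℕ) (hN : 1 ≤ N) (S C : Matrix (Fin N ⊕ Fin N) (Fin N ⊕ Fin N) ℝ)
    (hS : S.PosDef) (hC : C.PosDef) (hCb : blockForm C) :
    Real.log (dotPart S).det + 2 * N ≤ Real.log C.det + (C⁻¹ * S).trace ∧
    (Real.log C.det + (C⁻¹ * S).trace = Real.log (dotPart S).det + 2 * N ↔ C = dotPart S) :=
  statement10_general N S C hS hC hCb
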